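/- Every equilibrium of the vortex dipole system with r₁, r₂ ∈ (0,1) satisfies θ₁ - θ₂ = π (mod 2π), r₁ = r₂, and r₁ = √(Φ/(4Ω₀+Φ)); i.e., the equilibrium is unique up to rotation. -/
import Mathlib


set_option maxHeartbeats 1000000 in
/-- every equilibrium of the vortex dipole system in polar
coordinates with `r₁, r₂ ∈ (0,1)` satisfies `θ₁ - θ₂ = π (mod 2π)`,
`r₁ = r₂`, and `r₁ = √(Φ/(4Ω₀+Φ))`: the equilibrium is unique up to rotation. -/
theorem stationary_equilibrium_unique
    (Ω₀ Φ : ℝ) (hΩ₀ : 0 < Ω₀) (hΦ : 0 < Φ)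
    (r₁ r₂ θ₁ θ₂ : ℝ)
    (hr₁ : 0 < r₁) (hr₁' : r₁ < 1) (hr₂ : 0 < r₂) (hr₂' : r₂ < 1)
    (r₁₂sq : ℝ)
    (hr₁₂sq : r₁₂sq = r₁ ^ 2 + r₂ ^ 2 - 2 * r₁ * r₂ * Real.cos (θ₁ - θ₂))
    (hpos : 0 < r₁₂sq)
    (heq1 : Ω₀ / (1 - r₁ ^ 2)
      - (Φ / (2 * r₁₂sq)) * (1 - (r₂ / r₁) * Real.cos (θ₁ - θ₂)) = 0)
    (heq2 : -(Ω₀ / (1 - r₂ ^ 2))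
      + (Φ / (2 * r₁₂sq)) * (1 - (r₁ / r₂) * Real.cos (θ₁ - θ₂)) = 0)
    (heq3 : (Φ * r₂ / (2 * r₁₂sq)) * Real.sin (θ₁ - θ₂) = 0)
    (heq4 : (Φ * r₁ / (2 * r₁₂sq)) * Real.sin (θ₁ - θ₂) = 0) :
    (∃ k : ℤ, θ₁ - θ₂ = Real.pi + 2 * Real.pi * k) ∧
      r₁ = r₂ ∧ r₁ = Real.sqrt (Φ / (4 * Ω₀ + Φ)) := by
  have h1sq : (0:ℝ) < 1 - r₁ ^ 2 := by nlinarith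
  have h2sq : (0:ℝ) < 1 - r₂ ^ 2 := by nlinarith
  have hcoef : 0 < Φ * r₂ / (2 * r₁₂sq) := by positivity
  have hs : Real.sin (θ₁ - θ₂) = 0 := by
    rcases mul_eq_zero.mp heq3 with h | h
    · exact absurd h hcoef.ne'
    · exact h
  obtain ⟨n, hn⟩ := Real.sin_eq_zero_iff.mp hs
  rcases Int.even_or_odd n with ⟨m, hm⟩ | ⟨m, hm⟩
  · -- even: cos = 1, contradiction
    exfalso
    have hcos : Real.cos (θ₁ - θ₂) = 1 := by
      rw [← hn, hm]
      push_cast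
      rw [show ((m:ℝ) + m) * Real.pi = m * (2 * Real.pi) by ring]
      exact Real.cos_int_mul_two_pi m
    rw [hcos] at heq1 heq2
    have hP : 0 < Φ / (2 * r₁₂sq) := by positivity
    have h12 : r₂ < r₁ := by
      have hpos1 : 0 < Φ / (2 * r₁₂sq) * (1 - r₂ / r₁ * 1) := by
        have : 0 < Ω₀ / (1 - r₁ ^ 2) := div_pos hΩ₀ h1sq
        linarith
      have : 0 < 1 - r₂ / r₁ * 1 := by
        by_contra h
        push_neg at h
        nlinarith [mul_nonpos_of_nonneg_of_nonpos hP.le h]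
      have : r₂ / r₁ < 1 := by linarith
      calc r₂ = r₂ / r₁ * r₁ := by field_simp
        _ < 1 * r₁ := by exact mul_lt_mul_of_pos_right this hr₁
        _ = r₁ := one_mul r₁
    have h21 : r₁ < r₂ := by
      have hpos1 : 0 < Φ / (2 * r₁₂sq) * (1 - r₁ / r₂ * 1) := by
        have : 0 < Ω₀ / (1 - r₂ ^ 2) := div_pos hΩ₀ h2sq
        linarith
      have : 0 < 1 - r₁ / r₂ * 1 := by
        by_contra h
        push_neg at h
        nlinarith [mul_nonpos_of_nonneg_of_nonpos hP.le h]
      have : r₁ / r₂ < 1 := by linarith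
      calc r₁ = r₁ / r₂ * r₂ := by field_simp
        _ < 1 * r₂ := by exact mul_lt_mul_of_pos_right this hr₂
        _ = r₂ := one_mul r₂
    linarith
  · -- odd: cos = -1
    have hcos : Real.cos (θ₁ - θ₂) = -1 := by
      rw [← hn, hm]
      push_cast
      rw [show ((2:ℝ) * m + 1) * Real.pi = Real.pi + m * (2 * Real.pi) by ring]
      rw [Real.cos_add_int_mul_two_pi, Real.cos_pi]
    have hθ : ∃ k : ℤ, θ₁ - θ₂ = Real.pi + 2 * Real.pi * k := by
      refine ⟨m, ?_⟩
      rw [← hn, hm]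
      push_cast
      ring
    rw [hcos] at heq1 heq2 hr₁₂sq
    have hE1 : 2 * Ω₀ * r₁ * r₁₂sq = Φ * (1 - r₁ ^ 2) * (r₁ + r₂) := by
      field_simp at heq1
      linear_combination heq1
    have hE2 : 2 * Ω₀ * r₂ * r₁₂sq = Φ * (1 - r₂ ^ 2) * (r₁ + r₂) := by
      field_simp at heq2
      linear_combination -heq2
    have hsq : r₁₂sq = (r₁ + r₂) ^ 2 := by rw [hr₁₂sq]; ring
    have hkey : (r₁ - r₂) * ((r₁ + r₂) * (2 * Ω₀ * (r₁ + r₂) + Φ * (r₁ + r₂))) = 0 := by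
      linear_combination hE1 - hE2 - 2 * Ω₀ * (r₁ - r₂) * hsq
    have ha : 0 < r₁ + r₂ := add_pos hr₁ hr₂
    have hr12 : r₁ = r₂ := by
      rcases mul_eq_zero.mp hkey with h | h
      · linarith
      · have hb : 0 < 2 * Ω₀ * (r₁ + r₂) + Φ * (r₁ + r₂) := by
          nlinarith [mul_pos hΩ₀ ha, mul_pos hΦ ha]
        exact absurd h (mul_pos ha hb).ne'
    refine ⟨hθ, hr12, ?_⟩
    have hval : Φ / (4 * Ω₀ + Φ) = r₁ ^ 2 := by
      rw [hsq, ← hr12] at hE1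
      have h4 : 0 < 4 * Ω₀ + Φ := by linarith
      have hfac : (2 * r₁) * (4 * Ω₀ * r₁ ^ 2 - Φ * (1 - r₁ ^ 2)) = 0 := by
        linear_combination hE1
      have h0 : 4 * Ω₀ * r₁ ^ 2 - Φ * (1 - r₁ ^ 2) = 0 := by
        rcases mul_eq_zero.mp hfac with h | h
        · exfalso; linarith
        · exact h
      rw [div_eq_iff h4.ne']
      linear_combination -h0
    rw [hval, Real.sqrt_sq hr₁.le]
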